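/- Let G be a connected weighted graph, (A,B,S) a separation with S ⊆ A ∩ B separating A\S from B\S, 𝒢 the continuous graph of G, and let E_A, E_B be the edge sets of G[A] and G[B]. Then for every edge (a0,a1) ∈ E_A and every edge (b0,b1) ∈ E_B with {a0,a1} ⊄ B and {b0,b1} ⊄ A, the distance between any point p on edge a0a1 and any point q on edge b0b1 satisfies d_𝒢(p,q) = min over α,β ∈ {0,1} of ( dist_edge(p, a_α) + d_G(a_α, b_β) + dist_edge(b_β, q) ), where dist_edge denotes distance along the respective edge. -/
import Mathlib


open SimpleGraph

variable {V : Type*}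

/-- Length of a walk in a weighted graph: the sum of the lengths of its edges,
counted with multiplicity. -/
noncomputable def walkLen (ℓ : V → V → ℝ) {G : SimpleGraph V} {a b : V} (w : G.Walk a b) : ℝ :=
  (w.darts.map (fun d => ℓ d.toProd.1 d.toProd.2)).sum

/-- Shortest-path distance in the weighted graph: infimum of walk lengths. -/
noncomputable def gdist (G : SimpleGraph V) (ℓ : V → V → ℝ) (a b : V) : ℝ :=
  sInf {x | ∃ w : G.Walk a b, walkLen ℓ w = x}

/-- Endpoint (`u` or `v`) of the edge carrying a point `(u, v, lam)` of the continuous graph. -/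
def ept (p : V × V × ℝ) : Bool → V := fun i => if i then p.2.1 else p.1

/-- Offset of a point `(u, v, lam)` of the continuous graph to the chosen endpoint of its edge. -/
def off (ℓ : V → V → ℝ) (p : V × V × ℝ) : Bool → ℝ :=
  fun i => if i then ℓ p.1 p.2.1 - p.2.2 else p.2.2

/-- Geodesic distance between two points of the continuous graph `𝒢` of `G`:
a point `(u, v, lam)` lies on edge `uv` at distance `lam` along the edge from `u`.
It is the infimum of the lengths of all connections: leave the first edge through one of
its endpoints, walk in `G`, and enter the second edge through one of its endpoints;
or, if both points lie on the same edge, travel directly along that edge. -/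
noncomputable def pdist (G : SimpleGraph V) (ℓ : V → V → ℝ) (p q : V × V × ℝ) : ℝ :=
  sInf ({x | ∃ (i j : Bool) (w : G.Walk (ept p i) (ept q j)),
        x = off ℓ p i + walkLen ℓ w + off ℓ q j}
    ∪ {x | (p.1, p.2.1) = (q.1, q.2.1) ∧ x = |p.2.2 - q.2.2|}
    ∪ {x | (p.1, p.2.1) = (q.2.1, q.1) ∧ x = |p.2.2 - (ℓ q.1 q.2.1 - q.2.2)|})



lemma walkLen_nonneg {G : SimpleGraph V} (ℓ : V → V → ℝ) (hnn : ∀ u v, 0 ≤ ℓ u v)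
    {a b : V} (w : G.Walk a b) : 0 ≤ walkLen ℓ w := by
  apply List.sum_nonneg
  intro x hx
  simp only [List.mem_map] at hx
  obtain ⟨d, _, rfl⟩ := hx
  exact hnn _ _

lemma sInf_walk_set (G : SimpleGraph V) (hG : G.Connected)
    (ℓ : V → V → ℝ) (hnn : ∀ u v, 0 ≤ ℓ u v) (c d : ℝ) (u v : V) :
    sInf {x | ∃ w : G.Walk u v, x = c + walkLen ℓ w + d} = c + gdist G ℓ u v + d := by
  obtain ⟨w0⟩ := hG u v
  have hne : {x | ∃ w : G.Walk u v, walkLen ℓ w = x}.Nonempty := ⟨_, w0, rfl⟩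
  have hbd : BddBelow {x | ∃ w : G.Walk u v, walkLen ℓ w = x} :=
    ⟨0, by rintro x ⟨w, rfl⟩; exact walkLen_nonneg ℓ hnn w⟩
  have hglb : IsGLB {x | ∃ w : G.Walk u v, walkLen ℓ w = x} (gdist G ℓ u v) :=
    isGLB_csInf hne hbd
  have : IsGLB {x | ∃ w : G.Walk u v, x = c + walkLen ℓ w + d} (c + gdist G ℓ u v + d) := by
    constructor
    · rintro x ⟨w, rfl⟩
      have := hglb.1 ⟨w, rfl⟩
      linarith
    · intro b hb
      have : b - c - d ≤ gdist G ℓ u v := by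
        apply hglb.2
        rintro x ⟨w, rfl⟩
        have := hb ⟨w, rfl⟩
        linarith
      linarith
  exact this.csInf_eq ⟨_, w0, rfl⟩

/-- Let `(A,B,S)` be a separation of a connected weighted graph `G` (with `S = A ∩ B`
separating `A \ S` from `B \ A`), and let `𝒢` be the continuous graph of `G`.  For
every edge `a0a1` of `G[A]` and every edge `b0b1` of `G[B]` with `{a0,a1} ⊄ B` and
`{b0,b1} ⊄ A`, the distance between any point `p` on edge `a0a1` (at offset `λ` from
`a0`) and any point `q` on edge `b0b1` (at offset `μ` from `b0`) satisfies
`d_𝒢(p,q) = min_{α,β∈{0,1}} (dist_edge(p,a_α) + d_G(a_α,b_β) + dist_edge(b_β,q))`,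
where `dist_edge` is the distance along the respective edge. -/
theorem dist_across_separation (G : SimpleGraph V) (hG : G.Connected)
    (ℓ : V → V → ℝ) (hsym : ∀ u v, ℓ u v = ℓ v u) (hnn : ∀ u v, 0 ≤ ℓ u v)
    (A B : Set V) (hAB : A ∪ B = Set.univ)
    (hsep : ∀ u v : V, G.Adj u v → u ∈ A \ B → v ∈ A)
    (hsep' : ∀ u v : V, G.Adj u v → u ∈ B \ A → v ∈ B)
    (a0 a1 b0 b1 : V) (ha : G.Adj a0 a1) (hb : G.Adj b0 b1)
    (haA : a0 ∈ A ∧ a1 ∈ A) (hbB : b0 ∈ B ∧ b1 ∈ B)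
    (haB : ¬({a0, a1} : Set V) ⊆ B) (hbA : ¬({b0, b1} : Set V) ⊆ A) :
    ∀ lam ∈ Set.Icc 0 (ℓ a0 a1), ∀ mu ∈ Set.Icc 0 (ℓ b0 b1),
      pdist G ℓ (a0, a1, lam) (b0, b1, mu)
        = min (min (lam + gdist G ℓ a0 b0 + mu)
                   (lam + gdist G ℓ a0 b1 + (ℓ b0 b1 - mu)))
              (min ((ℓ a0 a1 - lam) + gdist G ℓ a1 b0 + mu)
                   ((ℓ a0 a1 - lam) + gdist G ℓ a1 b1 + (ℓ b0 b1 - mu))) := by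
  intro lam hlam mu hmu
  set p : _root_.Prod V (_root_.Prod V ℝ) := (a0, a1, lam) with hp
  set q : _root_.Prod V (_root_.Prod V ℝ) := (b0, b1, mu) with hq
  have hne1 : (a0, a1) ≠ (b0, b1) := by
    rintro h
    rw [Prod.mk.injEq] at h
    exact haB (by rintro x (rfl | rfl) <;> simp [h.1, h.2, hbB.1, hbB.2])
  have hne2 : (a0, a1) ≠ (b1, b0) := by
    rintro h
    rw [Prod.mk.injEq] at h
    exact haB (by rintro x (rfl | rfl) <;> simp [h.1, h.2, hbB.1, hbB.2])
  have h2 : {x | (p.1, p.2.1) = (q.1, q.2.1) ∧ x = |p.2.2 - q.2.2|} = (∅ : Set ℝ) := by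
    ext x; simp only [Set.mem_setOf_eq, Set.mem_empty_iff_false, iff_false, not_and]
    intro h; exact absurd h hne1
  have h3 : {x | (p.1, p.2.1) = (q.2.1, q.1) ∧ x = |p.2.2 - (ℓ q.1 q.2.1 - q.2.2)|}
      = (∅ : Set ℝ) := by
    ext x; simp only [Set.mem_setOf_eq, Set.mem_empty_iff_false, iff_false, not_and]
    intro h; exact absurd h hne2
  set S : Bool → Bool → Set ℝ := fun i j =>
    {x | ∃ w : G.Walk (ept p i) (ept q j), x = off ℓ p i + walkLen ℓ w + off ℓ q j} with hS
  have hsplit : {x | ∃ (i j : Bool) (w : G.Walk (ept p i) (ept q j)),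
        x = off ℓ p i + walkLen ℓ w + off ℓ q j}
      = ((S false false ∪ S false true) ∪ (S true false ∪ S true true)) := by
    ext x
    constructor
    · rintro ⟨i, j, w, rfl⟩
      cases i <;> cases j
      · exact Or.inl (Or.inl ⟨w, rfl⟩)
      · exact Or.inl (Or.inr ⟨w, rfl⟩)
      · exact Or.inr (Or.inl ⟨w, rfl⟩)
      · exact Or.inr (Or.inr ⟨w, rfl⟩)
    · rintro ((⟨w, rfl⟩ | ⟨w, rfl⟩) | (⟨w, rfl⟩ | ⟨w, rfl⟩))
      exacts [⟨false, false, w, rfl⟩, ⟨false, true, w, rfl⟩,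
        ⟨true, false, w, rfl⟩, ⟨true, true, w, rfl⟩]
  have hSne : ∀ i j, (S i j).Nonempty := by
    intro i j
    obtain ⟨w⟩ := hG (ept p i) (ept q j)
    exact ⟨_, w, rfl⟩
  have hSbd : ∀ i j, BddBelow (S i j) := by
    intro i j
    refine ⟨off ℓ p i + off ℓ q j, ?_⟩
    rintro x ⟨w, rfl⟩
    have := walkLen_nonneg ℓ hnn w
    linarith
  have hval : ∀ i j, sInf (S i j) = off ℓ p i + gdist G ℓ (ept p i) (ept q j) + off ℓ q j :=
    fun i j => sInf_walk_set G hG ℓ hnn _ _ _ _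
  rw [pdist, h2, h3, Set.union_empty, Set.union_empty, hsplit,
    csInf_union ((hSbd false false).union (hSbd false true))
      ((hSne false false).inl)
      ((hSbd true false).union (hSbd true true))
      ((hSne true false).inl),
    csInf_union (hSbd false false) (hSne false false) (hSbd false true) (hSne false true),
    csInf_union (hSbd true false) (hSne true false) (hSbd true true) (hSne true true),
    hval, hval, hval, hval]
  simp only [ept, off, if_true, if_false, hp, hq]
  rfl
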